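/- Let 0 < ε < π/2 and let u', u, v', v ∈ ℝ² with u' ≠ u, v' ≠ v and u ≠ v. Suppose the angle between the vector u − u' and e₂ = (0,1) is at most ε/2, the angle between the vector v − v' and e₂ is at most ε/2, and the undirected angles satisfy ∠ u' u v ≤ π/2 and ∠ v' v u ≤ π/2. Then the angle between the vector v − u and e₂ lies in the interval [π/2 − ε/2, π/2 + ε/2]; that is, v − u forms an angle of at most ε/2 with the horizontal axis. -/

import Mathlib

open Real EuclideanGeometry
open scoped RealInnerProductSpace

noncomputable section

abbrev Pt : Type := EuclideanSpace ℝ (Fin 2)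

/-- The upward unit vector `e₂ = (0, 1)`. -/
def e2 : Pt := EuclideanSpace.single (1 : Fin 2) (1 : ℝ)

namespace InnerProductGeometry

variable {V : Type*} [NormedAddCommGroup V] [InnerProductSpace ℝ V]

/-- `-x` makes an angle at least `π - δ` with `w`; the triangle inequality for angles through `y`
does the rest. -/
theorem pi_div_two_sub_le_angle_of_angle_le_of_angle_neg_le {x y w : V} {δ : ℝ}
    (hxw : angle x w ≤ δ) (hxy : angle (-x) y ≤ π / 2) : π / 2 - δ ≤ angle y w := by
  have := angle_le_angle_add_angle (-x) y w
  rw [angle_neg_left] at this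
  linarith

end InnerProductGeometry

theorem stmt9_general (ε : ℝ)
    (u' u v' v : Pt)
    (hu2 : InnerProductGeometry.angle (u - u') e2 ≤ ε / 2)
    (hv2 : InnerProductGeometry.angle (v - v') e2 ≤ ε / 2)
    (hau : ∠ u' u v ≤ π / 2) (hav : ∠ v' v u ≤ π / 2) :
    π / 2 - ε / 2 ≤ InnerProductGeometry.angle (v - u) e2 ∧
    InnerProductGeometry.angle (v - u) e2 ≤ π / 2 + ε / 2 := by
  rw [EuclideanGeometry.angle, vsub_eq_sub, vsub_eq_sub, ← neg_sub u u'] at hau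
  rw [EuclideanGeometry.angle, vsub_eq_sub, vsub_eq_sub, ← neg_sub v v'] at hav
  have hv := InnerProductGeometry.pi_div_two_sub_le_angle_of_angle_le_of_angle_neg_le hv2 hav
  rw [← neg_sub v u, InnerProductGeometry.angle_neg_left] at hv
  exact ⟨InnerProductGeometry.pi_div_two_sub_le_angle_of_angle_le_of_angle_neg_le hu2 hau, by linarith⟩

/-- If the edges into `u` and `v` are almost vertical (angle at most `ε/2` with
`e₂`) and the angles `∠ u' u v` and `∠ v' v u` are at most `90°`, then the
segment `uv` is almost horizontal: the angle of `v - u` with `e₂` lies in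
`[π/2 - ε/2, π/2 + ε/2]`. -/
theorem stmt9 (ε : ℝ) (hε0 : 0 < ε) (hε : ε < π / 2)
    (u' u v' v : Pt) (hu'u : u' ≠ u) (hv'v : v' ≠ v) (huv : u ≠ v)
    (hu2 : InnerProductGeometry.angle (u - u') e2 ≤ ε / 2)
    (hv2 : InnerProductGeometry.angle (v - v') e2 ≤ ε / 2)
    (hau : ∠ u' u v ≤ π / 2) (hav : ∠ v' v u ≤ π / 2) :
    π / 2 - ε / 2 ≤ InnerProductGeometry.angle (v - u) e2 ∧
    InnerProductGeometry.angle (v - u) e2 ≤ π / 2 + ε / 2 :=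
  stmt9_general ε u' u v' v hu2 hv2 hau hav
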